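/- arXiv:1701.08733 — 2 statements merged into one kernel-verified Lean document; each statement's English description precedes it below -/
import Mathlib

section
/- For every integer i ≥ 0 there exists a unique formal power series π_i(T) ∈ T·ℤ_p[[T]] such that E(π_i(T)) = (1+T)^{p^i}. -/
open PowerSeries

noncomputable section

open scoped Classical in
/-- The series ℓ(T) = ∑_{i≥0} T^{p^i}/p^i over ℚ. -/
def lseries (p : ℕ) : PowerSeries ℚ :=
  PowerSeries.mk fun n => if ∃ i : ℕ, n = p ^ i then (n : ℚ)⁻¹ else 0

/-- Substitution `f(g)` of a power series `g` with zero constant coefficient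
into a power series `f`. -/
def psComp {R : Type*} [CommSemiring R] (g f : PowerSeries R) : PowerSeries R :=
  PowerSeries.mk fun n =>
    ∑ k ∈ Finset.range (n + 1), PowerSeries.coeff k f * PowerSeries.coeff n (g ^ k)

/-- The Artin–Hasse exponential E(T) = exp(∑ T^{p^i}/p^i) over ℚ. -/
def artinHasse (p : ℕ) : PowerSeries ℚ := psComp (lseries p) (PowerSeries.exp ℚ)

variable (p : ℕ) [Fact p.Prime]

/-- The property that `Ep` is the Artin–Hasse exponential regarded as a power
series with coefficients in `ℤ_p` (its coefficients lie in `ℤ_(p) ⊆ ℤ_p`). -/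
def IsArtinHasseZp (Ep : PowerSeries ℤ_[p]) : Prop :=
  PowerSeries.map (PadicInt.Coe.ringHom) Ep
    = PowerSeries.map (Rat.castHom ℚ_[p]) (artinHasse p)

/-- The property that `πfam i` is the power series `π_i(T) ∈ T·ℤ_p[[T]]`
with `E(π_i(T)) = (1+T)^{p^i}`. -/
def IsPiFamily (Ep : PowerSeries ℤ_[p]) (πfam : ℕ → PowerSeries ℤ_[p]) : Prop :=
  ∀ i : ℕ, PowerSeries.constantCoeff (R := ℤ_[p]) (πfam i) = 0
    ∧ psComp (πfam i) Ep = (1 + X) ^ p ^ i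


/-! For `π ∈ T·R[[T]]` and `n ≥ 1`, the `n`-th coefficient of `E(π)` is `E₁·πₙ` plus an expression in
`E` and `π₁, …, πₙ₋₁`, because `π ≡ τ mod Tⁿ` implies `πᵏ ≡ τᵏ mod Tⁿ⁺¹` for `k ≠ 1` when `π(0) = τ(0) = 0`.
So when `E₁` is a unit, `E(π) = F` can be solved for the coefficients of `π` one at a time, uniquely,
as soon as `F(0) = E(0)`. The Artin–Hasse exponential has `E₀ = E₁ = 1`, and `(1+T)^{p^i}` has
constant term `1`. -/

lemma dvd_geom_sum₂_of_dvd {α : Type*} [CommRing α] {a x y : α} (hx : a ∣ x) (hy : a ∣ y)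
    {k : ℕ} (hk : k ≠ 1) : a ∣ ∑ j ∈ Finset.range k, x ^ j * y ^ (k - 1 - j) := by
  refine Finset.dvd_sum fun j hj => ?_
  rw [Finset.mem_range] at hj
  rcases Nat.eq_zero_or_pos j with rfl | hj0
  · exact (dvd_pow hy (by omega)).mul_left _
  · exact (dvd_pow hx hj0.ne').mul_right _

section Composition

variable {R : Type*} [CommRing R]

lemma coeff_pow_eq_of_coeff_eq {π τ : PowerSeries R} (hπ : constantCoeff π = 0)
    (hτ : constantCoeff τ = 0) {n : ℕ} (h : ∀ m < n, coeff m π = coeff m τ) {k : ℕ}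
    (hk : k ≠ 1) : coeff n (π ^ k) = coeff n (τ ^ k) := by
  have hsub : X ^ n ∣ π - τ := X_pow_dvd_iff.2 fun m hm => by rw [map_sub, h m hm, sub_self]
  have hpow : X ^ (n + 1) ∣ π ^ k - τ ^ k := by
    rw [← geom_sum₂_mul, pow_succ']
    exact mul_dvd_mul (dvd_geom_sum₂_of_dvd (X_dvd_iff.2 hπ) (X_dvd_iff.2 hτ) hk) hsub
  rw [← sub_eq_zero, ← map_sub]
  exact X_pow_dvd_iff.1 hpow n n.lt_succ_self

def psCompTail (π E : PowerSeries R) (n : ℕ) : R :=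
  ∑ k ∈ (Finset.range (n + 1)).erase 1, coeff k E * coeff n (π ^ k)

lemma coeff_zero_psComp (π E : PowerSeries R) : coeff 0 (psComp π E) = constantCoeff E := by
  simp [psComp]

lemma coeff_psComp_of_ne_zero (π E : PowerSeries R) {n : ℕ} (hn : n ≠ 0) :
    coeff n (psComp π E) = coeff 1 E * coeff n π + psCompTail π E n := by
  have h1 : 1 ∈ Finset.range (n + 1) := Finset.mem_range.2 (by omega)
  rw [psComp, coeff_mk, psCompTail, ← Finset.add_sum_erase _ _ h1, pow_one]

lemma psCompTail_congr (E : PowerSeries R) {π τ : PowerSeries R} (hπ : constantCoeff π = 0)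
    (hτ : constantCoeff τ = 0) {n : ℕ} (h : ∀ m < n, coeff m π = coeff m τ) :
    psCompTail π E n = psCompTail τ E n :=
  Finset.sum_congr rfl fun _ hk => by
    rw [coeff_pow_eq_of_coeff_eq hπ hτ h (Finset.ne_of_mem_erase hk)]

/-- The `dite` spells out the truncation of the solution below degree `n + 1`, so that the
recursion is well founded. -/
def psCompPreimageCoeff (E F : PowerSeries R) : ℕ → R
  | 0 => 0
  | n + 1 => Ring.inverse (coeff 1 E) * (coeff (n + 1) F -
      psCompTail (mk fun m => if _ : m < n + 1 then psCompPreimageCoeff E F m else 0) E (n + 1))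

def psCompPreimage (E F : PowerSeries R) : PowerSeries R := mk (psCompPreimageCoeff E F)

lemma constantCoeff_psCompPreimage (E F : PowerSeries R) :
    constantCoeff (psCompPreimage E F) = 0 := by
  rw [← coeff_zero_eq_constantCoeff_apply, psCompPreimage, coeff_mk, psCompPreimageCoeff]

lemma psComp_psCompPreimage {E F : PowerSeries R} (hE : IsUnit (coeff 1 E))
    (hF : constantCoeff F = constantCoeff E) : psComp (psCompPreimage E F) E = F := by
  ext (_ | n)
  · rw [coeff_zero_psComp, coeff_zero_eq_constantCoeff_apply, hF]
  set τ : PowerSeries R := mk fun m => if _ : m < n + 1 then psCompPreimageCoeff E F m else 0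
  have hτ : constantCoeff τ = 0 := by
    rw [← coeff_zero_eq_constantCoeff_apply, coeff_mk, dif_pos n.succ_pos, psCompPreimageCoeff]
  have htail : psCompTail (psCompPreimage E F) E (n + 1) = psCompTail τ E (n + 1) :=
    psCompTail_congr E (constantCoeff_psCompPreimage E F) hτ fun m hm => by
      rw [psCompPreimage, coeff_mk, coeff_mk, dif_pos hm]
  rw [coeff_psComp_of_ne_zero _ _ n.succ_ne_zero, htail, psCompPreimage, coeff_mk,
    psCompPreimageCoeff, Ring.mul_inverse_cancel_left _ _ hE, sub_add_cancel]

lemma eq_of_psComp_eq {E : PowerSeries R} (hE : IsUnit (coeff 1 E)) {π τ : PowerSeries R}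
    (hπ : constantCoeff π = 0) (hτ : constantCoeff τ = 0) (h : psComp π E = psComp τ E) :
    π = τ := by
  ext n
  induction n using Nat.strong_induction_on with
  | _ n ih =>
    rcases eq_or_ne n 0 with rfl | hn
    · rw [coeff_zero_eq_constantCoeff_apply, coeff_zero_eq_constantCoeff_apply, hπ, hτ]
    have hcoeff := congrArg (coeff n) h
    rw [coeff_psComp_of_ne_zero _ _ hn, coeff_psComp_of_ne_zero _ _ hn,
      psCompTail_congr E hπ hτ ih] at hcoeff
    exact hE.mul_left_cancel (add_right_cancel hcoeff)

theorem existsUnique_psComp_eq {E F : PowerSeries R} (hE : IsUnit (coeff 1 E))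
    (hF : constantCoeff F = constantCoeff E) :
    ∃! π : PowerSeries R, constantCoeff π = 0 ∧ psComp π E = F :=
  ⟨psCompPreimage E F, ⟨constantCoeff_psCompPreimage E F, psComp_psCompPreimage hE hF⟩,
    fun _ ⟨hτ, hτF⟩ => eq_of_psComp_eq hE hτ (constantCoeff_psCompPreimage E F)
      (hτF.trans (psComp_psCompPreimage hE hF).symm)⟩

end Composition

lemma constantCoeff_artinHasse (p : ℕ) : constantCoeff (artinHasse p) = 1 := by
  rw [← coeff_zero_eq_constantCoeff_apply, artinHasse, coeff_zero_psComp, constantCoeff_exp]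

lemma coeff_one_artinHasse (p : ℕ) : coeff 1 (artinHasse p) = 1 := by
  have hl : coeff 1 (lseries p) = 1 := by
    rw [lseries, coeff_mk, if_pos ⟨0, (pow_zero p).symm⟩, Nat.cast_one, inv_one]
  simp [artinHasse, psComp, Finset.sum_range_succ, hl, coeff_exp]

variable {p} in
lemma IsArtinHasseZp.coe_coeff {Ep : PowerSeries ℤ_[p]} (hEp : IsArtinHasseZp p Ep) (n : ℕ) :
    ((coeff n Ep : ℤ_[p]) : ℚ_[p]) = coeff n (artinHasse p) := by
  have h := congrArg (coeff n) hEp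
  rwa [coeff_map, coeff_map] at h

/-- for every integer `i ≥ 0` there is a unique formal power series
`π ∈ T·ℤ_p[[T]]` with `E(π) = (1+T)^{p^i}`. -/
theorem statement2 (Ep : PowerSeries ℤ_[p]) (hEp : IsArtinHasseZp p Ep) (i : ℕ) :
    ∃! π : PowerSeries ℤ_[p],
      PowerSeries.constantCoeff (R := ℤ_[p]) π = 0 ∧ psComp π Ep = (1 + X) ^ p ^ i := by
  have h0 : constantCoeff Ep = 1 := PadicInt.ext <| by
    simpa [constantCoeff_artinHasse] using hEp.coe_coeff 0
  have h1 : coeff 1 Ep = 1 := PadicInt.ext <| by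
    simpa [coeff_one_artinHasse] using hEp.coe_coeff 1
  exact existsUnique_psComp_eq (h1 ▸ isUnit_one) (by simp [h0])

end
end

section
/- Let A be a commutative ℚ-algebra, a ≥ 1 an integer, and x ∈ A an element with x^{p^a} = x. Then in A[[T]] one has the identity ∏_{l=0}^{a−1} E(x^{p^l}·T) = exp(t·ℓ(T)), where t = ∑_{l=0}^{a−1} x^{p^l}, ℓ(T) = ∑_{i≥0} T^{p^i}/p^i, E(c·T) denotes the power series obtained from E(T) by the rescaling T ↦ c·T, and exp(f) denotes the substitution of the constant-term-zero series f into the exponential power series. (When A is the fraction field of ℤ_q = W(𝔽_q) and x is the Teichmüller lift of an element of 𝔽_q, the element t equals Tr_{ℤ_q/ℤ_p}(x), so this identity expresses that E(T)^{Tr_{ℤ_q/ℤ_p}(x)} = Norm_{ℤ_q[[T]]/ℤ_p[[T]]}(E(Tx)).) -/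
/-!
Since `E(T) = exp(ℓ(T))`, each factor is `E(cT) = exp(ℓ(cT))`, and because `exp(g)` is the
unique solution of `y' = g' y` with `y(0) = 1`, the exponential turns the product into
`exp(∑_l ℓ(x^{p^l} T))`. The series `ℓ` is supported on the exponents `p^i`, and the
coefficient of `T^{p^i}` in that sum is `∑_l x^{p^{l+i}} / p^i`; since `l ↦ x^{p^l}` has
period `a`, this is `t / p^i`, so the sum is `t · ℓ(T)`.
-/

open PowerSeries

noncomputable section

open Finset

theorem Function.Periodic.sum_range_add {M : Type*} [AddCommMonoid M] {f : ℕ → M} {a : ℕ}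
    (hf : Function.Periodic f a) (i : ℕ) :
    ∑ l ∈ range a, f (l + i) = ∑ l ∈ range a, f l := by
  have shift : ∀ g : ℕ → M, Function.Periodic g a →
      ∑ l ∈ range a, g (l + 1) = ∑ l ∈ range a, g l := by
    intro g hg
    rcases a with _ | b
    · rfl
    · rw [sum_range_succ, sum_range_succ' g, ← hg 0, zero_add]
  induction i with
  | zero => rfl
  | succ i ih =>
    rw [← ih, ← shift _ (hf.add_const i)]
    simp only [add_right_comm, add_assoc]

section Composition

variable {R S : Type*} [CommRing R] [CommRing S]

theorem map_psComp (φ : R →+* S) (g f : R⟦X⟧) :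
    map φ (psComp g f) = psComp (map φ g) (map φ f) := by
  ext n
  simp [psComp, ← map_pow]

theorem rescale_psComp (c : R) (g f : R⟦X⟧) :
    rescale c (psComp g f) = psComp (rescale c g) f := by
  ext n
  simp only [psComp, coeff_rescale, coeff_mk, mul_sum, ← map_pow]
  exact sum_congr rfl fun k _ => by ring

theorem psComp_eq_subst {g : R⟦X⟧} (hg : constantCoeff g = 0) (f : R⟦X⟧) :
    psComp g f = f.subst g := by
  ext n
  rw [coeff_subst' (HasSubst.of_constantCoeff_zero' hg), psComp, coeff_mk,
    finsum_eq_sum_of_support_subset (s := range (n + 1))]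
  · simp only [smul_eq_mul]
  · intro d hd
    by_contra hdn
    have hnd : n < d := by simpa using hdn
    apply hd
    dsimp only
    rw [X_pow_dvd_iff.mp (pow_dvd_pow_of_dvd (X_dvd_iff.mpr hg) d) n hnd, smul_zero]

theorem constantCoeff_subst_of_constantCoeff_eq_zero {g : R⟦X⟧} (hg : constantCoeff g = 0)
    (f : R⟦X⟧) : constantCoeff (f.subst g) = constantCoeff f := by
  rw [← coeff_zero_eq_constantCoeff_apply, ← psComp_eq_subst hg, psComp, coeff_mk]
  simp

end Composition

namespace PowerSeries

theorem constantCoeff_rescale {R : Type*} [CommRing R] (c : R) (f : R⟦X⟧) :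
    constantCoeff (rescale c f) = constantCoeff f := by
  simp only [← coeff_zero_eq_constantCoeff_apply, coeff_rescale, pow_zero, one_mul]

theorem eq_of_derivative_eq_mul_self {R : Type*} [CommRing R] [IsAddTorsionFree R]
    {q f g : R⟦X⟧} (hf : d⁄dX R f = q * f) (hg : d⁄dX R g = q * g)
    (h0 : constantCoeff f = constantCoeff g) : f = g := by
  suffices h : ∀ n, ∀ m ≤ n, coeff m f = coeff m g from ext fun n => h n n le_rfl
  intro n
  induction n with
  | zero => simpa using h0
  | succ n ih =>
    intro m hm
    rcases Nat.le_succ_iff.mp hm with hm | rfl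
    · exact ih m hm
    have hd : coeff n (d⁄dX R f) = coeff n (d⁄dX R g) := by
      rw [hf, hg, coeff_mul, coeff_mul]
      exact sum_congr rfl fun ij hij => by
        rw [ih ij.2 (by rw [HasAntidiagonal.mem_antidiagonal] at hij; omega)]
    rw [coeff_derivative, coeff_derivative, ← Nat.cast_succ, mul_comm, ← nsmul_eq_mul,
      mul_comm, ← nsmul_eq_mul] at hd
    exact (smul_right_inj n.succ_ne_zero).mp hd

variable {A : Type*} [CommRing A]

theorem derivative_exp_subst [Algebra ℚ A] {g : A⟦X⟧} (hg : HasSubst g) :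
    d⁄dX A ((exp A).subst g) = d⁄dX A g * (exp A).subst g := by
  rw [derivative_subst hg, derivative_exp, mul_comm]

theorem exp_subst_add [Algebra ℚ A] {g h : A⟦X⟧} (hg : constantCoeff g = 0)
    (hh : constantCoeff h = 0) :
    (exp A).subst (g + h) = (exp A).subst g * (exp A).subst h := by
  have : IsAddTorsionFree A := .of_module_rat A
  have hg' := HasSubst.of_constantCoeff_zero' hg
  have hh' := HasSubst.of_constantCoeff_zero' hh
  refine eq_of_derivative_eq_mul_self (q := d⁄dX A (g + h))
    (derivative_exp_subst (hg'.add hh')) ?_ ?_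
  · rw [Derivation.leibniz, derivative_exp_subst hg', derivative_exp_subst hh', map_add,
      smul_eq_mul, smul_eq_mul]
    ring
  · rw [map_mul, constantCoeff_subst_of_constantCoeff_eq_zero (by simp [hg, hh]),
      constantCoeff_subst_of_constantCoeff_eq_zero hg,
      constantCoeff_subst_of_constantCoeff_eq_zero hh]
    simp

theorem exp_subst_sum [Algebra ℚ A] {ι : Type*} (s : Finset ι) {g : ι → A⟦X⟧}
    (hg : ∀ i ∈ s, constantCoeff (g i) = 0) :
    (exp A).subst (∑ i ∈ s, g i) = ∏ i ∈ s, (exp A).subst (g i) := by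
  induction s using Finset.cons_induction with
  | empty => simp [subst_zero_eq_C_constantCoeff]
  | cons i s his ih =>
    rw [sum_cons, prod_cons, ← ih fun j hj => hg j (mem_cons_of_mem hj),
      exp_subst_add (hg i (mem_cons_self i s))
        (by rw [map_sum]; exact sum_eq_zero fun j hj => hg j (mem_cons_of_mem hj))]

theorem sum_rescale_pow_pow_eq_C_mul {p a : ℕ} {x : A} (hx : x ^ p ^ a = x) {L : A⟦X⟧}
    (hL : ∀ n, coeff n L ≠ 0 → ∃ i, n = p ^ i) :
    ∑ l ∈ range a, rescale (x ^ p ^ l) L = C (∑ l ∈ range a, x ^ p ^ l) * L := by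
  have hper : Function.Periodic (fun l => x ^ p ^ l) a := fun l => by
    simp only [pow_add, pow_mul', hx]
  ext n
  rw [map_sum, coeff_C_mul]
  simp only [coeff_rescale]
  by_cases hn : coeff n L = 0
  · simp [hn]
  obtain ⟨i, rfl⟩ := hL n hn
  rw [← sum_mul]
  congr 1
  calc ∑ l ∈ range a, (x ^ p ^ l) ^ p ^ i = ∑ l ∈ range a, x ^ p ^ (l + i) := by
        simp only [← pow_mul, ← pow_add]
    _ = ∑ l ∈ range a, x ^ p ^ l := hper.sum_range_add i

end PowerSeries

theorem statement12_general (p : ℕ) (A : Type*) [CommRing A] [Algebra ℚ A]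
    (a : ℕ) (x : A) (hx : x ^ p ^ a = x) :
    ∏ l ∈ Finset.range a,
        PowerSeries.rescale (x ^ p ^ l) (PowerSeries.map (algebraMap ℚ A) (artinHasse p))
      = psComp
          (PowerSeries.C (R := A) (∑ l ∈ Finset.range a, x ^ p ^ l)
            * PowerSeries.map (algebraMap ℚ A) (lseries p))
          (PowerSeries.exp A) := by
  set L := map (algebraMap ℚ A) (lseries p)
  have hL0 : constantCoeff L = 0 := by
    rw [← coeff_zero_eq_constantCoeff_apply, coeff_map, lseries, coeff_mk]
    -- `0 = p ^ i` can hold (for `p = 0`), but then the coefficient is `0⁻¹ = 0`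
    split_ifs <;> simp
  have hLsupp : ∀ n, coeff n L ≠ 0 → ∃ i, n = p ^ i := fun n hn => by
    by_contra h
    exact hn (by rw [coeff_map, lseries, coeff_mk, if_neg h, map_zero])
  have hfactor : ∀ c : A, rescale c (map (algebraMap ℚ A) (artinHasse p))
      = (exp A).subst (rescale c L) := fun c => by
    rw [artinHasse, map_psComp, map_exp, rescale_psComp,
      psComp_eq_subst (by rw [constantCoeff_rescale, hL0])]
  rw [prod_congr rfl fun l _ => hfactor _,
    ← exp_subst_sum _ fun l _ => by rw [constantCoeff_rescale, hL0],
    sum_rescale_pow_pow_eq_C_mul hx hLsupp, psComp_eq_subst (by rw [map_mul, hL0, mul_zero])]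

/-- for a commutative ℚ-algebra `A`, an integer `a ≥ 1` and `x ∈ A` with
`x^{p^a} = x`, one has `∏_{l=0}^{a−1} E(x^{p^l}·T) = exp(t·ℓ(T))` in `A[[T]]`, where
`t = ∑_{l=0}^{a−1} x^{p^l}` and `ℓ(T) = ∑_{i≥0} T^{p^i}/p^i`. -/
theorem statement12 (p : ℕ) [Fact p.Prime] (A : Type*) [CommRing A] [Algebra ℚ A]
    (a : ℕ) (ha : 1 ≤ a) (x : A) (hx : x ^ p ^ a = x) :
    ∏ l ∈ Finset.range a,
        PowerSeries.rescale (x ^ p ^ l) (PowerSeries.map (algebraMap ℚ A) (artinHasse p))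
      = psComp
          (PowerSeries.C (R := A) (∑ l ∈ Finset.range a, x ^ p ^ l)
            * PowerSeries.map (algebraMap ℚ A) (lseries p))
          (PowerSeries.exp A) :=
  statement12_general p A a x hx

end
end
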